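/- arXiv:1410.6743 — 6 statements merged into one kernel-verified Lean document; each statement's English description precedes it below -/
import Mathlib

section
/- If t mutually orthogonal incomplete latin squares of order n with a common hole of order m exist (with n > m), then n ≥ (t+1)m. -/
/-- An incomplete latin square of order `n` with hole `M`:
cells are empty iff both coordinates lie in `M`, rows and columns contain
each symbol at most once, and symbols of `M` do not appear in rows or
columns indexed by `M`. -/
def IsILS {n : ℕ} (M : Finset (Fin n)) (L : Fin n → Fin n → Option (Fin n)) : Prop :=
  (∀ i j, L i j = none ↔ (i ∈ M ∧ j ∈ M)) ∧
  (∀ i j j' s, L i j = some s → L i j' = some s → j = j') ∧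
  (∀ i i' j s, L i j = some s → L i' j = some s → i = i') ∧
  (∀ i j s, s ∈ M → (i ∈ M ∨ j ∈ M) → L i j ≠ some s)

/-- Two incomplete latin squares with common hole `M` are orthogonal:
every ordered pair of symbols not both in `M` appears exactly once upon
superimposition. -/
def OrthILS {n : ℕ} (M : Finset (Fin n)) (L L' : Fin n → Fin n → Option (Fin n)) : Prop :=
  ∀ p q : Fin n, ¬(p ∈ M ∧ q ∈ M) →
    ∃! ij : Fin n × Fin n, L ij.1 ij.2 = some p ∧ L' ij.1 ij.2 = some q


/-!
Let `N` be the complement of the hole. In every square, each row indexed by `N` contains each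
of the `m` hole symbols once, necessarily in a column of `N`; so each square puts hole symbols
into `(n - m) m` cells of `N × N`. For two orthogonal squares, the cells realising the
`n² - m²` pairs of symbols not both in `M` are distinct and lie outside `M × M`, so they are all
the `n² - m²` cells there; so no cell carries a hole symbol in two squares. Hence
`t (n - m) m ≤ (n - m)²`, i.e. `t m ≤ n - m`.
-/

open Finset

variable {n : ℕ} {M : Finset (Fin n)} {L L' : Fin n → Fin n → Option (Fin n)}

def holeSymbolCells (M : Finset (Fin n)) (L : Fin n → Fin n → Option (Fin n)) :
    Finset (Fin n × Fin n) :=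
  univ.filter fun c => ∃ s ∈ M, L c.1 c.2 = some s

namespace IsILS

lemma exists_eq_some (hL : IsILS M L) {i j : Fin n} (hij : ¬(i ∈ M ∧ j ∈ M)) :
    ∃ s, L i j = some s :=
  Option.ne_none_iff_exists'.mp (mt (hL.1 i j).mp hij)

lemma not_mem_and_mem_of_eq_some (hL : IsILS M L) {i j s : Fin n} (h : L i j = some s) :
    ¬(i ∈ M ∧ j ∈ M) :=
  fun hij => Option.some_ne_none s (h.symm.trans ((hL.1 i j).mpr hij))

lemma exists_col_eq_some (hL : IsILS M L) {i : Fin n} (hi : i ∉ M) (s : Fin n) :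
    ∃ j, L i j = some s := by
  choose σ hσ using fun j => hL.exists_eq_some (i := i) (j := j) fun h => hi h.1
  have hinj : Function.Injective σ := fun j j' h =>
    hL.2.1 i j j' (σ j) (hσ j) (h ▸ hσ j')
  obtain ⟨j, rfl⟩ := Finite.injective_iff_surjective.mp hinj s
  exact ⟨j, hσ j⟩

lemma exists_col_notMem_eq_some (hL : IsILS M L) {i s : Fin n} (hi : i ∉ M) (hs : s ∈ M) :
    ∃ j ∉ M, L i j = some s := by
  obtain ⟨j, hj⟩ := hL.exists_col_eq_some hi s
  exact ⟨j, fun hjM => hL.2.2.2 i j s hs (Or.inr hjM) hj, hj⟩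

lemma holeSymbolCells_subset (hL : IsILS M L) : holeSymbolCells M L ⊆ Mᶜ ×ˢ Mᶜ := by
  intro c hc
  obtain ⟨s, hs, hcs⟩ := (mem_filter.mp hc).2
  simp only [mem_product, mem_compl]
  exact ⟨fun h => hL.2.2.2 _ _ s hs (Or.inl h) hcs, fun h => hL.2.2.2 _ _ s hs (Or.inr h) hcs⟩

lemma card_mul_card_le_card_holeSymbolCells (hL : IsILS M L) :
    #Mᶜ * #M ≤ #(holeSymbolCells M L) := by
  rw [← card_product]
  refine card_le_card_of_surjOn (fun c => (c.1, (L c.1 c.2).getD c.2)) ?_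
  rintro ⟨i, s⟩ his
  obtain ⟨hi, hs⟩ := mem_product.mp his
  obtain ⟨j, -, hj⟩ := hL.exists_col_notMem_eq_some (mem_compl.mp hi) hs
  refine ⟨(i, j), mem_filter.mpr ⟨mem_univ _, s, hs, hj⟩, ?_⟩
  simp only [hj, Option.getD_some]

end IsILS

namespace OrthILS

lemma not_both_mem_of_eq_some (hL : IsILS M L) (h : OrthILS M L L') {i j s s' : Fin n}
    (hs : L i j = some s) (hs' : L' i j = some s') : ¬(s ∈ M ∧ s' ∈ M) := by
  let D := {c : Fin n × Fin n // ¬(c.1 ∈ M ∧ c.2 ∈ M)}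
  choose cell hcell using fun p : D => (h p.1.1 p.1.2 p.2).exists
  let φ : D → D := fun p => ⟨cell p, hL.not_mem_and_mem_of_eq_some (hcell p).1⟩
  have hφ : Function.Injective φ := fun p q hpq => by
    have hc : cell p = cell q := congrArg Subtype.val hpq
    obtain ⟨hp1, hp2⟩ := hcell p
    obtain ⟨hq1, hq2⟩ := hcell q
    rw [hc, hq1, Option.some_inj] at hp1
    rw [hc, hq2, Option.some_inj] at hp2
    exact Subtype.ext (Prod.ext hp1.symm hp2.symm)
  obtain ⟨p, hp⟩ :=
    Finite.injective_iff_surjective.mp hφ ⟨(i, j), hL.not_mem_and_mem_of_eq_some hs⟩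
  have hcp : cell p = (i, j) := congrArg Subtype.val hp
  obtain ⟨hp1, hp2⟩ := hcell p
  rw [hcp, hs, Option.some_inj] at hp1
  rw [hcp, hs', Option.some_inj] at hp2
  exact hp1 ▸ hp2 ▸ p.2

lemma disjoint_holeSymbolCells (hL : IsILS M L) (h : OrthILS M L L') :
    Disjoint (holeSymbolCells M L) (holeSymbolCells M L') := by
  refine disjoint_left.mpr fun c hc hc' => ?_
  obtain ⟨s, hsM, hs⟩ := (mem_filter.mp hc).2
  obtain ⟨s', hs'M, hs'⟩ := (mem_filter.mp hc').2
  exact h.not_both_mem_of_eq_some hL hs hs' ⟨hsM, hs'M⟩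

end OrthILS

/-- If `t` mutually orthogonal incomplete latin squares of order `n` with a common
hole of order `m` exist (with `n > m`), then `n ≥ (t+1)m`. -/
theorem imols_hole_bound (t n m : ℕ) (M : Finset (Fin n)) (hM : M.card = m)
    (L : Fin t → Fin n → Fin n → Option (Fin n))
    (hL : ∀ a, IsILS M (L a))
    (horth : ∀ a b, a ≠ b → OrthILS M (L a) (L b))
    (hnm : n > m) :
    n ≥ (t + 1) * m := by
  have hcompl : #Mᶜ = n - m := by rw [card_compl, hM, Fintype.card_fin]
  have hdisj : ((univ : Finset (Fin t)) : Set (Fin t)).PairwiseDisjoint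
      fun a => holeSymbolCells M (L a) :=
    fun a _ b _ hab => (horth a b hab).disjoint_holeSymbolCells (hL a)
  have hcount : t * m * (n - m) ≤ (n - m) * (n - m) := calc
    t * m * (n - m) = ∑ _a : Fin t, #Mᶜ * #M := by
      rw [sum_const, card_univ, Fintype.card_fin, hcompl, hM, smul_eq_mul]; ring
    _ ≤ ∑ a, #(holeSymbolCells M (L a)) :=
      sum_le_sum fun a _ => (hL a).card_mul_card_le_card_holeSymbolCells
    _ = #(univ.biUnion fun a => holeSymbolCells M (L a)) := (card_biUnion hdisj).symm
    _ ≤ #(Mᶜ ×ˢ Mᶜ) :=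
      card_le_card (biUnion_subset.mpr fun a _ => (hL a).holeSymbolCells_subset)
    _ = (n - m) * (n - m) := by rw [card_product, hcompl]
  have htm : t * m ≤ n - m := Nat.le_of_mul_le_mul_right hcount (Nat.sub_pos_of_lt hnm)
  rw [add_one_mul]
  omega
end

section
/- If an IPBD((v;w),K) exists with v > w and k = min K, then v ≥ (k-1)w + 1. -/
open Finset

/-!
Fix a point `x` outside the hole. The blocks through `x` partition the other `v - 1` points, each
block contributing at least `k - 1` of them. Every hole point shares a block with `x`, and no block
meets the hole twice, so `x` lies on at least `w` blocks; hence `(k - 1) w ≤ v - 1`.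
-/

theorem Multiset.sum_countP_mem_eq_sum_card_inter {α : Type*} [DecidableEq α]
    (B : Multiset (Finset α)) (s : Finset α) :
    ∑ a ∈ s, B.countP (a ∈ ·) = (B.map fun t => #(s ∩ t)).sum := by
  induction B using Multiset.induction with
  | empty => simp
  | cons t B ih => simp [Multiset.countP_cons, sum_add_distrib, ih, add_comm]

section PencilAtPoint

variable {α : Type*} [DecidableEq α] {B : Multiset (Finset α)} {x : α}

theorem card_le_card_filter_mem {W : Finset α}
    (hhole : ∀ b ∈ B, ∀ y ∈ b, ∀ z ∈ b, y ∈ W → z ∈ W → y = z)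
    (hcov : ∀ p ∈ W, 1 ≤ B.countP (fun b => p ∈ b ∧ x ∈ b)) :
    #W ≤ Multiset.card (B.filter (x ∈ ·)) :=
  calc #W = ∑ _p ∈ W, 1 := card_eq_sum_ones W
    _ ≤ ∑ p ∈ W, (B.filter (x ∈ ·)).countP (p ∈ ·) :=
        sum_le_sum fun p hp => by simpa only [Multiset.countP_filter] using hcov p hp
    _ = ((B.filter (x ∈ ·)).map fun b => #(W ∩ b)).sum :=
        Multiset.sum_countP_mem_eq_sum_card_inter _ _
    _ ≤ ((B.filter (x ∈ ·)).map fun _ => 1).sum :=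
        Multiset.sum_map_le_sum_map _ _ fun b hb => card_le_one.mpr fun y hy z hz => by
          rw [mem_inter] at hy hz
          exact hhole b (Multiset.mem_of_mem_filter hb) y hy.2 z hz.2 hy.1 hz.1
    _ = Multiset.card (B.filter (x ∈ ·)) := by simp

theorem sum_card_sub_one_filter_mem [Fintype α]
    (hcov : ∀ y ≠ x, B.countP (fun b => y ∈ b ∧ x ∈ b) = 1) :
    ((B.filter (x ∈ ·)).map fun b => #b - 1).sum = Fintype.card α - 1 :=
  calc ((B.filter (x ∈ ·)).map fun b => #b - 1).sum
      = ((B.filter (x ∈ ·)).map fun b => #(univ.erase x ∩ b)).sum := by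
        refine congrArg _ (Multiset.map_congr rfl fun b hb => ?_)
        rw [erase_inter, univ_inter, card_erase_of_mem (Multiset.mem_filter.mp hb).2]
    _ = ∑ y ∈ univ.erase x, (B.filter (x ∈ ·)).countP (y ∈ ·) :=
        (Multiset.sum_countP_mem_eq_sum_card_inter _ _).symm
    _ = ∑ _y ∈ univ.erase x, 1 := sum_congr rfl fun y hy => by
        simpa only [Multiset.countP_filter] using hcov y (ne_of_mem_erase hy)
    _ = Fintype.card α - 1 := by simp [card_erase_of_mem]

end PencilAtPoint

theorem Multiset.card_mul_le_sum_map_card_sub_one {α : Type*} {M : Multiset (Finset α)} {k : ℕ}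
    (hk : ∀ b ∈ M, k ≤ #b) :
    (k - 1) * Multiset.card M ≤ (M.map fun b => #b - 1).sum := by
  simpa [mul_comm] using Multiset.card_nsmul_le_sum (s := M.map fun b => #b - 1) (a := k - 1) <| by
    simp only [Multiset.mem_map, forall_exists_index, and_imp]
    rintro _ b hb rfl
    exact Nat.sub_le_sub_right (hk b hb) 1

theorem ipbd_hole_size_bound_general (v w : ℕ) (hvw : w < v)
    (K : Set ℕ)
    (k : ℕ) (hkmin : ∀ j ∈ K, k ≤ j)
    (W : Finset (Fin v)) (hW : W.card = w)
    (B : Multiset (Finset (Fin v)))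
    (hsz : ∀ b ∈ B, b.card ∈ K)
    (hhole : ∀ b ∈ B, ∀ x ∈ b, ∀ y ∈ b, x ∈ W → y ∈ W → x = y)
    (hcov : ∀ x y : Fin v, x ≠ y → ¬(x ∈ W ∧ y ∈ W) →
      Multiset.countP (fun s => x ∈ s ∧ y ∈ s) B = 1) :
    v ≥ (k - 1) * w + 1 := by
  obtain ⟨x, -, hx⟩ : ∃ x ∈ (univ : Finset (Fin v)), x ∉ W :=
    exists_mem_notMem_of_card_lt_card (by simpa [hW] using hvw)
  have hdeg : w ≤ Multiset.card (B.filter (x ∈ ·)) := hW ▸ card_le_card_filter_mem hhole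
    fun p hp => (hcov p x (fun h => hx (h ▸ hp)) fun h => hx h.2).ge
  have hpencil : ((B.filter (x ∈ ·)).map fun b => #b - 1).sum = v - 1 := by
    simpa using sum_card_sub_one_filter_mem fun y hy => hcov y x hy fun h => hx h.2
  have hlen := Multiset.card_mul_le_sum_map_card_sub_one (M := B.filter (x ∈ ·)) (k := k)
    fun b hb => hkmin _ (hsz b (Multiset.mem_of_mem_filter hb))
  have hdeg_scaled := Nat.mul_le_mul_left (k - 1) hdeg
  omega

/-- If an `IPBD((v;w),K)` exists with `v > w` and `k = min K`,
then `v ≥ (k-1)w + 1`. -/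
theorem ipbd_hole_size_bound (v w : ℕ) (hvw : w < v)
    (K : Set ℕ) (hK : ∀ j ∈ K, 2 ≤ j)
    (k : ℕ) (hkK : k ∈ K) (hkmin : ∀ j ∈ K, k ≤ j)
    (W : Finset (Fin v)) (hW : W.card = w)
    (B : Multiset (Finset (Fin v)))
    (hsz : ∀ b ∈ B, b.card ∈ K)
    (hhole : ∀ b ∈ B, ∀ x ∈ b, ∀ y ∈ b, x ∈ W → y ∈ W → x = y)
    (hcov : ∀ x y : Fin v, x ≠ y → ¬(x ∈ W ∧ y ∈ W) →
      Multiset.countP (fun s => x ∈ s ∧ y ∈ s) B = 1) :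
    v ≥ (k - 1) * w + 1 :=
  ipbd_hole_size_bound_general v w hvw K k hkmin W hW B hsz hhole hcov
end

section
/- Given a GDD (V, Π, B) with groups V_1,...,V_u, a weight function ω : V → ℕ, and for every block B ∈ B a GDD of type [ω(x) : x ∈ B] with block sizes in K, there exists a GDD with block sizes in K of type [∑_{x∈V_1} ω(x), ..., ∑_{x∈V_u} ω(x)] (Wilson's fundamental construction). -/
/-- There exists a group divisible design with group sizes given by the
multiset `T` and block sizes in `K`. -/
def GDDTypeExists (T : Multiset ℕ) (K : Set ℕ) : Prop :=
  ∃ (v u : ℕ) (grp : Fin v → Fin u) (B : Multiset (Finset (Fin v))),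
    Multiset.map (fun i => (Finset.univ.filter fun x => grp x = i).card)
        (Finset.univ.val : Multiset (Fin u)) = T ∧
    (∀ b ∈ B, b.card ∈ K) ∧
    (∀ b ∈ B, ∀ x ∈ b, ∀ y ∈ b, grp x = grp y → x = y) ∧
    (∀ x y : Fin v, grp x ≠ grp y →
      Multiset.countP (fun s => x ∈ s ∧ y ∈ s) B = 1)

/-! Replace every point `x` of the master design by the `ω x` points `⟨x, k⟩`, and every master
block `b` by a copy of its ingredient GDD, relabelled so that the ingredient's groups are the
fibres over the points of `b`. New points over `x` and `y` from different master groups share a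
copy only for the unique master block containing `x` and `y`, and inside that copy they share
exactly one ingredient block. -/

open Finset

theorem Multiset.countP_bind_eq_countP {α β : Type*} {s : Multiset α} {f : α → Multiset β}
    {p : β → Prop} [DecidablePred p] {q : α → Prop} [DecidablePred q]
    (h : ∀ a ∈ s, (f a).countP p = if q a then 1 else 0) :
    (s.bind f).countP p = s.countP q := by
  induction s using Multiset.induction_on with
  | empty => simp
  | cons a s ih =>
    rw [Multiset.forall_mem_cons] at h
    rw [Multiset.cons_bind, Multiset.countP_add, Multiset.countP_cons, h.1, ih h.2, add_comm]

theorem exists_equiv_of_map_univ_eq {α β γ : Type*} [Fintype α] [Fintype β] [DecidableEq γ]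
    {f : α → γ} {g : β → γ} (h : univ.val.map f = univ.val.map g) :
    ∃ e : α ≃ β, ∀ a, g (e a) = f a := by
  have hfiber : ∀ c, Fintype.card {a // f a = c} = Fintype.card {b // g b = c} := fun c => by
    have := congrArg (Multiset.count c) h
    simp only [Multiset.count_map, eq_comm (a := c)] at this
    simpa [Fintype.card_subtype, Finset.card, Finset.filter_val] using this
  exact ⟨Equiv.ofFiberEquiv fun c => Fintype.equivOfCardEq (hfiber c), Equiv.ofFiberEquiv_map _⟩

theorem card_filter_fst_sigma_fin {V : Type*} [Fintype V] (ω : V → ℕ) (q : V → Prop)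
    [DecidablePred q] : #{p : Σ x, Fin (ω x) | q p.1} = ∑ x with q x, ω x := by
  have : ({p : Σ x, Fin (ω x) | q p.1} : Finset _) =
      ({x | q x} : Finset V).sigma fun _ => univ := by
    ext ⟨x, k⟩; simp
  rw [this, card_sigma]
  simp

/-- A GDD on an arbitrary point type, whose groups are the fibres of `grp`. A design with
arbitrary block sizes, such as the master design, is one with `K = Set.univ`. -/
structure IsGDD {P G : Type*} [DecidableEq P] (grp : P → G) (B : Multiset (Finset P))
    (K : Set ℕ) : Prop where
  card_mem : ∀ b ∈ B, b.card ∈ K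
  eq_of_grp_eq : ∀ b ∈ B, ∀ x ∈ b, ∀ y ∈ b, grp x = grp y → x = y
  countP_eq_one : ∀ x y, grp x ≠ grp y → B.countP (fun s => x ∈ s ∧ y ∈ s) = 1

namespace IsGDD

variable {P Q G H : Type*} [DecidableEq P] [DecidableEq Q] {grp : P → G}
  {B : Multiset (Finset P)} {K : Set ℕ}

theorem map_equiv (hB : IsGDD grp B K) (e : P ≃ Q) (grp' : Q → H)
    (hgrp : ∀ x y, grp' (e x) = grp' (e y) ↔ grp x = grp y) :
    IsGDD grp' (B.map (Finset.map e.toEmbedding)) K where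
  card_mem := by
    simpa only [Multiset.forall_mem_map_iff, card_map] using hB.card_mem
  eq_of_grp_eq := by
    simp only [Multiset.forall_mem_map_iff, Finset.forall_mem_map, Equiv.coe_toEmbedding, hgrp,
      e.apply_eq_iff_eq]
    exact hB.eq_of_grp_eq
  countP_eq_one x y hxy := by
    obtain ⟨x, rfl⟩ := e.surjective x
    obtain ⟨y, rfl⟩ := e.surjective y
    rw [Multiset.countP_map, ← Multiset.countP_eq_card_filter]
    simpa only [Finset.mem_map_equiv, Equiv.symm_apply_apply] using
      hB.countP_eq_one x y (mt (hgrp x y).mpr hxy)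

end IsGDD

theorem GDDTypeExists.exists_isGDD_sigma {α : Type*} [DecidableEq α] {s : Finset α}
    {f : α → ℕ} {K : Set ℕ} (h : GDDTypeExists (s.val.map f) K) :
    ∃ B : Multiset (Finset (Σ x : s, Fin (f x))), IsGDD Sigma.fst B K := by
  obtain ⟨v, u, grp, B, htype, hK, hmeet, hcov⟩ := h
  obtain ⟨σ, hσ⟩ := exists_equiv_of_map_univ_eq (g := fun x : s => f x) <| by
    rw [htype, univ_eq_attach, attach_val]; exact (Multiset.attach_map_val' _ _).symm
  let e : Fin v ≃ Σ x : s, Fin (f x) := (Equiv.sigmaFiberEquiv grp).symm.trans <|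
    Equiv.sigmaCongr σ fun i => Fintype.equivFinOfCardEq <| by rw [Fintype.card_subtype, hσ]
  exact ⟨_, IsGDD.map_equiv ⟨hK, hmeet, hcov⟩ e Sigma.fst fun _ _ => σ.injective.eq_iff⟩

theorem GDDTypeExists.of_isGDD {P : Type*} [Fintype P] [DecidableEq P] {u : ℕ}
    {grp : P → Fin u} {B : Multiset (Finset P)} {K : Set ℕ} (hB : IsGDD grp B K) :
    GDDTypeExists (univ.val.map fun i => #{x | grp x = i}) K := by
  let δ := Fintype.equivFin P
  obtain ⟨hK, hmeet, hcov⟩ := hB.map_equiv δ (grp ∘ δ.symm) (by simp)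
  refine ⟨_, u, _, _, Multiset.map_congr rfl fun i _ => ?_, hK, hmeet, hcov⟩
  simp only [Function.comp_apply, ← Fintype.card_subtype]
  exact Fintype.card_congr (δ.symm.subtypeEquiv fun _ => Iff.rfl)

section FundamentalConstruction

variable {V : Type*} (ω : V → ℕ)

def sigmaRestrictEmbedding (b : Finset V) : (Σ x : b, Fin (ω x)) ↪ Σ x, Fin (ω x) :=
  (Function.Embedding.subtype (· ∈ b)).sigmaMap fun _ => Function.Embedding.refl _

variable [DecidableEq V]

def wilsonBlocks (B : Multiset (Finset V))
    (D : ∀ b : Finset V, Multiset (Finset (Σ x : b, Fin (ω x)))) :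
    Multiset (Finset (Σ x, Fin (ω x))) :=
  B.bind fun b => (D b).map (Finset.map (sigmaRestrictEmbedding ω b))

variable {ω} {K : Set ℕ}

theorem IsGDD.countP_map_sigmaRestrictEmbedding {b : Finset V}
    {D : Multiset (Finset (Σ x : b, Fin (ω x)))} (hD : IsGDD Sigma.fst D K)
    {p q : Σ x, Fin (ω x)} (hpq : p.1 ≠ q.1) :
    (D.map (Finset.map (sigmaRestrictEmbedding ω b))).countP (fun t => p ∈ t ∧ q ∈ t) =
      if p.1 ∈ b ∧ q.1 ∈ b then 1 else 0 := by
  rcases p with ⟨x, k⟩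
  rcases q with ⟨y, l⟩
  split_ifs with hb
  · rw [Multiset.countP_map, ← Multiset.countP_eq_card_filter]
    refine (Multiset.countP_congr rfl fun s _ => ?_).trans <|
      hD.countP_eq_one ⟨⟨x, hb.1⟩, k⟩ ⟨⟨y, hb.2⟩, l⟩ fun h => hpq (congrArg Subtype.val h)
    exact propext <| and_congr
      (Finset.mem_map' (sigmaRestrictEmbedding ω b) (a := ⟨⟨x, hb.1⟩, k⟩))
      (Finset.mem_map' (sigmaRestrictEmbedding ω b) (a := ⟨⟨y, hb.2⟩, l⟩))
  · rw [Multiset.countP_eq_zero]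
    rintro _ hs ⟨hx, hy⟩
    obtain ⟨s, -, rfl⟩ := Multiset.mem_map.mp hs
    obtain ⟨x', -, hx'⟩ := Finset.mem_map.mp hx
    obtain ⟨y', -, hy'⟩ := Finset.mem_map.mp hy
    exact hb ⟨hx' ▸ x'.1.2, hy' ▸ y'.1.2⟩

theorem IsGDD.fundamental_construction {G : Type*} {grp : V → G} {B : Multiset (Finset V)}
    (hB : IsGDD grp B Set.univ) {D : ∀ b : Finset V, Multiset (Finset (Σ x : b, Fin (ω x)))}
    (hD : ∀ b ∈ B, IsGDD Sigma.fst (D b) K) :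
    IsGDD (fun p => grp p.1) (wilsonBlocks ω B D) K where
  card_mem := by
    simp only [wilsonBlocks, Multiset.mem_bind, Multiset.mem_map]
    rintro _ ⟨b, hb, s, hs, rfl⟩
    rw [card_map]
    exact (hD b hb).card_mem s hs
  eq_of_grp_eq := by
    simp only [wilsonBlocks, Multiset.mem_bind, Multiset.mem_map]
    rintro _ ⟨b, hb, s, hs, rfl⟩ _ hp _ hq hgrp
    obtain ⟨p, hps, rfl⟩ := Finset.mem_map.mp hp
    obtain ⟨q, hqs, rfl⟩ := Finset.mem_map.mp hq
    have hfst : p.1 = q.1 := Subtype.ext (hB.eq_of_grp_eq b hb _ p.1.2 _ q.1.2 hgrp)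
    rw [(hD b hb).eq_of_grp_eq s hs p hps q hqs hfst]
  countP_eq_one p q hpq := by
    rw [wilsonBlocks, ← hB.countP_eq_one p.1 q.1 hpq]
    exact Multiset.countP_bind_eq_countP fun b hb =>
      (hD b hb).countP_map_sigmaRestrictEmbedding fun h => hpq (congrArg grp h)

end FundamentalConstruction

/-- Wilson's fundamental construction: given a master GDD, a weight function `ω`,
and for every block an ingredient GDD with block sizes in `K` whose group type is
the multiset of weights of the block's points, there exists a GDD with block sizes
in `K` whose group type is given by the total weights of the master's groups. -/
theorem wilson_fundamental_construction (v u : ℕ) (grp : Fin v → Fin u)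
    (B : Multiset (Finset (Fin v)))
    (hmeet : ∀ b ∈ B, ∀ x ∈ b, ∀ y ∈ b, grp x = grp y → x = y)
    (hcov : ∀ x y : Fin v, grp x ≠ grp y →
      Multiset.countP (fun s => x ∈ s ∧ y ∈ s) B = 1)
    (ω : Fin v → ℕ) (K : Set ℕ)
    (hing : ∀ b ∈ B, GDDTypeExists (Multiset.map ω b.val) K) :
    GDDTypeExists
      (Multiset.map (fun i => ∑ x ∈ Finset.univ.filter (fun x => grp x = i), ω x)
        (Finset.univ.val : Multiset (Fin u))) K := by
  have hmaster : IsGDD grp B Set.univ := ⟨fun _ _ => trivial, hmeet, hcov⟩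
  have hingredient : ∀ b : Finset (Fin v), ∃ D : Multiset (Finset (Σ x : b, Fin (ω x))),
      b ∈ B → IsGDD Sigma.fst D K := fun b => by
    by_cases hb : b ∈ B
    · obtain ⟨D, hD⟩ := (hing b hb).exists_isGDD_sigma
      exact ⟨D, fun _ => hD⟩
    · exact ⟨0, fun h => absurd h hb⟩
  choose D hD using hingredient
  have := GDDTypeExists.of_isGDD (hmaster.fundamental_construction fun b hb => hD b hb)
  convert this using 3 with i
  exact (card_filter_fst_sigma_fin ω (grp · = i)).symm
end

section
/- If a GDD(T,K) on v points exists having a group of size a, and for every other group size g occurring in T there exists an IPBD((g+i; i), K), then there exists an IPBD((v+i; a+i), K). -/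
/-- There exists an incomplete pairwise balanced design `IPBD((n;m),K)`. -/
def IPBDExists (n m : ℕ) (K : Set ℕ) : Prop :=
  ∃ (W : Finset (Fin n)) (B : Multiset (Finset (Fin n))),
    W.card = m ∧
    (∀ b ∈ B, b.card ∈ K) ∧
    (∀ b ∈ B, ∀ x ∈ b, ∀ y ∈ b, x ∈ W → y ∈ W → x = y) ∧
    (∀ x y : Fin n, x ≠ y → ¬(x ∈ W ∧ y ∈ W) →
      Multiset.countP (fun s => x ∈ s ∧ y ∈ s) B = 1)

/-!
Adjoin a set `I` of `i` new points, keep the blocks of the GDD, and on `G ∪ I` of every group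
`G ≠ G₀` place a copy of an `IPBD((|G| + i; i), K)` with hole `I`. Two points of distinct groups
lie in a block of the GDD and in no copy; two points of one group `G ≠ G₀`, or a point of `G`
and a new point, lie in no block of the GDD and in exactly one block of the copy on `G ∪ I`.
The only pairs left uncovered are those inside `G₀ ∪ I`, which becomes the hole.
-/

open Finset

section Designs

variable {α β : Type*} [DecidableEq α] [DecidableEq β]

def pairCount (B : Multiset (Finset α)) (x y : α) : ℕ :=
  B.countP fun s => x ∈ s ∧ y ∈ s

theorem pairCount_comm (B : Multiset (Finset α)) (x y : α) :
    pairCount B x y = pairCount B y x :=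
  Multiset.countP_congr rfl fun _ _ => propext and_comm

theorem pairCount_add (B C : Multiset (Finset α)) (x y : α) :
    pairCount (B + C) x y = pairCount B x y + pairCount C x y :=
  Multiset.countP_add _ _ _

theorem pairCount_sum {ι : Type*} (s : Finset ι) (B : ι → Multiset (Finset α)) (x y : α) :
    pairCount (∑ j ∈ s, B j) x y = ∑ j ∈ s, pairCount (B j) x y :=
  map_sum (Multiset.countPAddMonoidHom _) B s

theorem pairCount_map (f : α ↪ β) (B : Multiset (Finset α)) (x y : α) :
    pairCount (B.map (Finset.map f)) (f x) (f y) = pairCount B x y := by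
  rw [pairCount, Multiset.countP_map]
  simp only [mem_map', Multiset.countP_eq_card_filter, pairCount]

theorem pairCount_eq_zero_of_forall_notMem {B : Multiset (Finset α)} {x y : α}
    (h : ∀ b ∈ B, y ∉ b) : pairCount B x y = 0 :=
  Multiset.countP_eq_zero.2 fun b hb hxy => h b hb hxy.2

/-- The point set `P` sits inside a larger type so that designs on different point sets can be
superimposed by adding their blocks. -/
structure IsIPBD (P W : Finset α) (K : Set ℕ) (B : Multiset (Finset α)) : Prop where
  card_mem : ∀ b ∈ B, #b ∈ K
  subset : ∀ b ∈ B, b ⊆ P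
  hole : ∀ b ∈ B, ∀ x ∈ b, ∀ y ∈ b, x ∈ W → y ∈ W → x = y
  pairCount_eq_one : ∀ x ∈ P, ∀ y ∈ P, x ≠ y → ¬(x ∈ W ∧ y ∈ W) → pairCount B x y = 1

namespace IsIPBD

variable {P W : Finset α} {K : Set ℕ} {B : Multiset (Finset α)}

theorem pairCount_eq_zero_right (hB : IsIPBD P W K B) {x y : α} (hy : y ∉ P) :
    pairCount B x y = 0 :=
  pairCount_eq_zero_of_forall_notMem fun b hb hyb => hy (hB.subset b hb hyb)

theorem pairCount_eq_zero_left (hB : IsIPBD P W K B) {x y : α} (hx : x ∉ P) :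
    pairCount B x y = 0 := by
  rw [pairCount_comm]; exact hB.pairCount_eq_zero_right hx

theorem map (hB : IsIPBD P W K B) (f : α ↪ β) :
    IsIPBD (P.map f) (W.map f) K (B.map (Finset.map f)) where
  card_mem := by
    simpa only [Multiset.forall_mem_map_iff, card_map] using hB.card_mem
  subset := by
    simpa only [Multiset.forall_mem_map_iff, map_subset_map] using hB.subset
  hole := by
    simpa only [Multiset.forall_mem_map_iff, forall_mem_map, mem_map', f.injective.eq_iff]
      using hB.hole
  pairCount_eq_one := by
    simpa only [forall_mem_map, mem_map', pairCount_map, f.injective.ne_iff]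
      using hB.pairCount_eq_one

end IsIPBD

theorem ipbdExists_iff {n m : ℕ} {K : Set ℕ} :
    IPBDExists n m K ↔ ∃ (W : Finset (Fin n)) (B : Multiset (Finset (Fin n))),
      #W = m ∧ IsIPBD univ W K B := by
  constructor
  · rintro ⟨W, B, hW, hK, hhole, hcount⟩
    exact ⟨W, B, hW, hK, fun _ _ => subset_univ _, hhole, fun x _ y _ => hcount x y⟩
  · rintro ⟨W, B, hW, hK, -, hhole, hcount⟩
    exact ⟨W, B, hW, hK, hhole, fun x y => hcount x (mem_univ x) y (mem_univ y)⟩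

end Designs

theorem exists_embedding_map_eq {α β : Type*} [Fintype α] [DecidableEq α] {A : Finset α}
    {E S : Finset β} (hES : Disjoint E S) (hA : #A = #E) (hAc : #Aᶜ = #S) :
    ∃ f : α ↪ β, A.map f = E ∧ Aᶜ.map f = S := by
  let e₁ := A.equivOfCardEq hA
  let e₂ := Aᶜ.equivOfCardEq hAc
  let f : α → β := fun x => if hx : x ∈ A then e₁ ⟨x, hx⟩ else e₂ ⟨x, mem_compl.2 hx⟩
  have hfA : ∀ x ∈ A, f x ∈ E := fun x hx => by simp only [f, dif_pos hx, coe_mem]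
  have hfAc : ∀ x ∉ A, f x ∈ S := fun x hx => by simp only [f, dif_neg hx, coe_mem]
  have hf : Function.Injective f := by
    intro x y hxy
    by_cases hx : x ∈ A <;> by_cases hy : y ∈ A
    · simp only [f, dif_pos hx, dif_pos hy] at hxy
      exact congrArg Subtype.val (e₁.injective (Subtype.ext hxy))
    · exact (disjoint_left.1 hES (hfA x hx) (hxy ▸ hfAc y hy)).elim
    · exact (disjoint_left.1 hES (hfA y hy) (hxy ▸ hfAc x hx)).elim
    · simp only [f, dif_neg hx, dif_neg hy] at hxy
      exact congrArg Subtype.val (e₂.injective (Subtype.ext hxy))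
  refine ⟨⟨f, hf⟩, eq_of_subset_of_card_le ?_ ?_, eq_of_subset_of_card_le ?_ ?_⟩
  · intro y hy
    obtain ⟨x, hx, rfl⟩ := mem_map.1 hy
    exact hfA x hx
  · rw [card_map, hA]
  · intro y hy
    obtain ⟨x, hx, rfl⟩ := mem_map.1 hy
    exact hfAc x (mem_compl.1 hx)
  · rw [card_map, hAc]

theorem IPBDExists.exists_isIPBD {α : Type*} [DecidableEq α] {n m : ℕ} {K : Set ℕ}
    (h : IPBDExists n m K) {S E : Finset α} (hSE : Disjoint S E) (hE : #E = m) (hS : #S + m = n) :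
    ∃ B, IsIPBD (S ∪ E) E K B := by
  obtain ⟨W, B, hW, hB⟩ := ipbdExists_iff.1 h
  obtain ⟨f, hfW, hfWc⟩ := exists_embedding_map_eq hSE.symm (hW.trans hE.symm)
    (by rw [card_compl, Fintype.card_fin, hW]; omega)
  have hP : univ.map f = S ∪ E := by
    rw [← union_compl W, map_union, hfW, hfWc, union_comm]
  exact ⟨B.map (Finset.map f), hP ▸ hfW ▸ hB.map f⟩

section GDD

variable {α β ι : Type*} [DecidableEq α]

structure IsGDD_s8 (grp : α → ι) (K : Set ℕ) (B : Multiset (Finset α)) : Prop where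
  card_mem : ∀ b ∈ B, #b ∈ K
  injOn : ∀ b ∈ B, ∀ x ∈ b, ∀ y ∈ b, grp x = grp y → x = y
  pairCount_eq_one : ∀ x y, grp x ≠ grp y → pairCount B x y = 1

theorem IsGDD_s8.pairCount_eq_zero {grp : α → ι} {K : Set ℕ} {B : Multiset (Finset α)}
    (hB : IsGDD_s8 grp K B) {x y : α} (hxy : x ≠ y) (h : grp x = grp y) : pairCount B x y = 0 :=
  Multiset.countP_eq_zero.2 fun b hb hb' => hxy (hB.injOn b hb x hb'.1 y hb'.2 h)

variable [DecidableEq β] [DecidableEq ι] [Fintype α] [Fintype β]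

/-- The points of the filled design are `α ⊕ β`: the old points and the new points `β`. -/
def extendedGroup (grp : α → ι) (j : ι) : Finset (α ⊕ β) :=
  (univ.filter (grp · = j)).map .inl ∪ univ.map .inr

variable {grp : α → ι}

@[simp]
theorem inl_mem_extendedGroup {a : α} {j : ι} :
    (.inl a : α ⊕ β) ∈ extendedGroup grp j ↔ grp a = j := by
  simp [extendedGroup]

@[simp]
theorem inr_mem_extendedGroup {b : β} {j : ι} : (.inr b : α ⊕ β) ∈ extendedGroup grp j := by
  simp [extendedGroup]

theorem card_extendedGroup (j : ι) :
    #(extendedGroup (β := β) grp j) = #(univ.filter (grp · = j)) + Fintype.card β := by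
  rw [extendedGroup, card_union_of_disjoint (disjoint_map_inl_map_inr _ _), card_map, card_map,
    card_univ]

variable [Fintype ι] {K : Set ℕ} {B : Multiset (Finset α)} {j₀ : ι}
  {M : ι → Multiset (Finset (α ⊕ β))}

theorem sum_pairCount_inl_of_isIPBD
    (hM : ∀ j ≠ j₀, IsIPBD (extendedGroup grp j) (univ.map .inr) K (M j)) (a : α) (y : α ⊕ β) :
    ∑ j ∈ univ.erase j₀, pairCount (M j) (.inl a) y =
      if grp a = j₀ then 0 else pairCount (M (grp a)) (.inl a) y := by
  have hzero : ∀ j ∈ univ.erase j₀, j ≠ grp a → pairCount (M j) (.inl a) y = 0 :=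
    fun j hj hja => (hM j (ne_of_mem_erase hj)).pairCount_eq_zero_left (by simpa using hja.symm)
  split_ifs with h
  · exact sum_eq_zero fun j hj => hzero j hj (h ▸ ne_of_mem_erase hj)
  · exact sum_eq_single_of_mem _ (mem_erase.2 ⟨h, mem_univ _⟩) hzero

theorem IsGDD_s8.pairCount_fill_inl_eq_one (hB : IsGDD_s8 grp K B)
    (hM : ∀ j ≠ j₀, IsIPBD (extendedGroup grp j) (univ.map .inr) K (M j)) {a : α} {y : α ⊕ β}
    (hay : (.inl a : α ⊕ β) ≠ y)
    (hW : ¬((.inl a : α ⊕ β) ∈ extendedGroup grp j₀ ∧ y ∈ extendedGroup grp j₀)) :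
    pairCount (B.map (Finset.map .inl) + ∑ j ∈ univ.erase j₀, M j) (.inl a) y = 1 := by
  have hB_inl : ∀ a', pairCount (B.map (Finset.map .inl)) (.inl a : α ⊕ β) (.inl a') =
      pairCount B a a' := pairCount_map .inl B a
  rw [pairCount_add, pairCount_sum, sum_pairCount_inl_of_isIPBD hM]
  by_cases ha : grp a = j₀
  · obtain ⟨a', rfl, ha'⟩ : ∃ a', y = .inl a' ∧ grp a' ≠ j₀ := by
      rcases y with a' | b
      · exact ⟨a', rfl, by simpa [ha] using hW⟩
      · simp [ha] at hW
    rw [if_pos ha, add_zero, hB_inl]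
    exact hB.pairCount_eq_one a a' (ha ▸ ha'.symm)
  have hMa := hM (grp a) ha
  rw [if_neg ha]
  rcases y with a' | b
  · by_cases h : grp a = grp a'
    · rw [hB_inl, hB.pairCount_eq_zero (fun h => hay (congrArg _ h)) h, zero_add]
      exact hMa.pairCount_eq_one _ (by simp) _ (by simp [h]) hay (by simp)
    · rw [hB_inl, hB.pairCount_eq_one a a' h,
        hMa.pairCount_eq_zero_right (by simpa using Ne.symm h)]
  · rw [pairCount_eq_zero_of_forall_notMem (by simp), zero_add]
    exact hMa.pairCount_eq_one _ (by simp) _ (by simp) hay (by simp)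

theorem IsGDD_s8.isIPBD_fill (hB : IsGDD_s8 grp K B)
    (hM : ∀ j ≠ j₀, IsIPBD (extendedGroup grp j) (univ.map .inr) K (M j)) :
    IsIPBD univ (extendedGroup grp j₀) K (B.map (Finset.map .inl) + ∑ j ∈ univ.erase j₀, M j) where
  card_mem b hb := by
    rcases Multiset.mem_add.1 hb with hbB | hbM
    · obtain ⟨c, hc, rfl⟩ := Multiset.mem_map.1 hbB
      rw [card_map]
      exact hB.card_mem c hc
    · obtain ⟨j, hj, hbj⟩ := Multiset.mem_sum.1 hbM
      exact (hM j (ne_of_mem_erase hj)).card_mem b hbj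
  subset _ _ := subset_univ _
  hole b hb x hx y hy hxW hyW := by
    rcases Multiset.mem_add.1 hb with hbB | hbM
    · obtain ⟨c, hc, rfl⟩ := Multiset.mem_map.1 hbB
      obtain ⟨a, ha, rfl⟩ := mem_map.1 hx
      obtain ⟨a', ha', rfl⟩ := mem_map.1 hy
      simp only [Function.Embedding.inl_apply, inl_mem_extendedGroup] at hxW hyW
      exact congrArg _ (hB.injOn c hc a ha a' ha' (hxW.trans hyW.symm))
    · obtain ⟨j, hj, hbj⟩ := Multiset.mem_sum.1 hbM
      have hMj := hM j (ne_of_mem_erase hj)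
      have mem_hole : ∀ z ∈ b, z ∈ extendedGroup grp j₀ → z ∈ univ.map .inr := by
        rintro (a | b') hz hzW
        · have hzj : grp a = j := by simpa using hMj.subset b hbj hz
          exact (ne_of_mem_erase hj (hzj.symm.trans (by simpa using hzW))).elim
        · simp
      exact hMj.hole b hbj x hx y hy (mem_hole x hx hxW) (mem_hole y hy hyW)
  pairCount_eq_one := by
    rintro (a | b) - y - hxy hW
    · exact hB.pairCount_fill_inl_eq_one hM hxy hW
    rcases y with a | b'
    · rw [pairCount_comm]
      exact hB.pairCount_fill_inl_eq_one hM hxy.symm (by rwa [and_comm])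
    · exact absurd ⟨by simp, by simp⟩ hW

end GDD

/-- Filling all but one group of a GDD: if a `GDD(T,K)` on `v` points exists having a
distinguished group of size `a`, and for every other group there exists an
`IPBD((g+i; i), K)` where `g` is the group's size, then there exists an
`IPBD((v+i; a+i), K)`. -/
theorem gdd_to_ipbd (v u i : ℕ) (K : Set ℕ)
    (grp : Fin v → Fin u)
    (B : Multiset (Finset (Fin v)))
    (hsz : ∀ b ∈ B, b.card ∈ K)
    (hmeet : ∀ b ∈ B, ∀ x ∈ b, ∀ y ∈ b, grp x = grp y → x = y)
    (hcov : ∀ x y : Fin v, grp x ≠ grp y →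
      Multiset.countP (fun s => x ∈ s ∧ y ∈ s) B = 1)
    (j₀ : Fin u)
    (hfill : ∀ j : Fin u, j ≠ j₀ →
      IPBDExists ((Finset.univ.filter fun x => grp x = j).card + i) i K) :
    IPBDExists (v + i) ((Finset.univ.filter fun x => grp x = j₀).card + i) K := by
  have hfills : ∀ j, ∃ M : Multiset (Finset (Fin v ⊕ Fin i)), j ≠ j₀ →
      IsIPBD (extendedGroup grp j) (univ.map .inr) K M := by
    intro j
    by_cases hj : j = j₀
    · exact ⟨0, fun h => (h hj).elim⟩
    · exact ((hfill j hj).exists_isIPBD (disjoint_map_inl_map_inr _ _) (by simp)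
        (by simp)).imp fun _ hM _ => hM
  choose M hM using hfills
  have hD := (IsGDD_s8.isIPBD_fill ⟨hsz, hmeet, hcov⟩ hM).map finSumFinEquiv.toEmbedding
  rw [map_univ_equiv] at hD
  refine ipbdExists_iff.2 ⟨_, _, ?_, hD⟩
  rw [card_map, card_extendedGroup, Fintype.card_fin]
end

section
/- Suppose there exists an IPBD((n;m), K), and for each k ∈ K there exist t mutually orthogonal idempotent latin squares of order k. Then there exist t mutually orthogonal incomplete latin squares of order n with a common hole of order m (t-IMOLS(n;m)). -/
/-- `L` is a latin square of order `k`. -/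
def IsLatin {k : ℕ} (L : Fin k → Fin k → Fin k) : Prop :=
  (∀ i, Function.Injective fun j => L i j) ∧ (∀ j, Function.Injective fun i => L i j)

/-- Two latin squares of order `k` are orthogonal. -/
def OrthLS {k : ℕ} (L L' : Fin k → Fin k → Fin k) : Prop :=
  Function.Bijective fun p : Fin k × Fin k => (L p.1 p.2, L' p.1 p.2)

/-! Every pair of distinct points not both in the hole `W` lies in exactly one block `b`; the
`a`-th square places in cell `(x, y)` the entry of the `a`-th idempotent latin square on `b`, puts
`x` on the diagonal outside `W` and leaves `W × W` empty. By idempotence an off-diagonal entry is a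
third point of `b`, so any two of row, column and symbol determine the block, and latinness and
orthogonality reduce to the same properties of the squares on a single block. -/

theorem Multiset.existsUnique_of_countP_eq_one {α : Type*} {p : α → Prop} [DecidablePred p]
    {s : Multiset α} (h : s.countP p = 1) : ∃! a, a ∈ s ∧ p a := by
  rw [Multiset.countP_eq_card_filter, Multiset.card_eq_one] at h
  obtain ⟨a, ha⟩ := h
  have hmem : ∀ x, x ∈ s ∧ p x ↔ x = a := fun x => by
    rw [← Multiset.mem_filter, ha, Multiset.mem_singleton]
  exact ⟨a, (hmem a).2 rfl, fun x hx => (hmem x).1 hx⟩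

section Squares

variable {α : Type*}

structure IsIdempotentLatinOn (b : Finset α) (S : α → α → α) : Prop where
  mem : ∀ x ∈ b, ∀ y ∈ b, S x y ∈ b
  row_injOn : ∀ x ∈ b, Set.InjOn (S x) b
  col_injOn : ∀ y ∈ b, Set.InjOn (S · y) b
  idem : ∀ x ∈ b, S x x = x

def OrthOn (b : Finset α) (S S' : α → α → α) : Prop :=
  Set.BijOn (fun p : α × α => (S p.1 p.2, S' p.1 p.2)) ((b : Set α) ×ˢ b) ((b : Set α) ×ˢ b)

def IsIdempotentMOLSOn {t : ℕ} (b : Finset α) (S : Fin t → α → α → α) : Prop :=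
  (∀ a, IsIdempotentLatinOn b (S a)) ∧ ∀ a a', a ≠ a' → OrthOn b (S a) (S a')

namespace IsIdempotentLatinOn

variable {b : Finset α} {S : α → α → α} {x y : α}

theorem ne_left (h : IsIdempotentLatinOn b S) (hx : x ∈ b) (hy : y ∈ b) (hxy : x ≠ y) :
    S x y ≠ x := fun hS =>
  hxy (h.row_injOn x hx hy hx (by rw [hS, h.idem x hx])).symm

theorem ne_right (h : IsIdempotentLatinOn b S) (hx : x ∈ b) (hy : y ∈ b) (hxy : x ≠ y) :
    S x y ≠ y := fun hS =>
  hxy (h.col_injOn y hy hx hy (show S x y = S y y by rw [hS, h.idem y hy]))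

end IsIdempotentLatinOn

end Squares

namespace Finset

variable {α : Type*}

theorem exists_equivFin_symm_eq {b : Finset α} {x : α} (hx : x ∈ b) :
    ∃ i, (b.equivFin.symm i : α) = x :=
  ⟨b.equivFin ⟨x, hx⟩, by simp⟩

variable [DecidableEq α] (b : Finset α)

noncomputable def squareOn (L : Fin b.card → Fin b.card → Fin b.card) (x y : α) : α :=
  if h : x ∈ b ∧ y ∈ b then b.equivFin.symm (L (b.equivFin ⟨x, h.1⟩) (b.equivFin ⟨y, h.2⟩))
  else x

variable {b}

@[simp]
theorem squareOn_equivFin_symm (L : Fin b.card → Fin b.card → Fin b.card) (i j : Fin b.card) :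
    b.squareOn L (b.equivFin.symm i) (b.equivFin.symm j) = b.equivFin.symm (L i j) := by
  simp [squareOn]

theorem squareOn_mem {L : Fin b.card → Fin b.card → Fin b.card} {x y : α} (hx : x ∈ b)
    (hy : y ∈ b) : b.squareOn L x y ∈ b := by
  obtain ⟨i, rfl⟩ := exists_equivFin_symm_eq hx
  obtain ⟨j, rfl⟩ := exists_equivFin_symm_eq hy
  simp

theorem isIdempotentLatinOn_squareOn {L : Fin b.card → Fin b.card → Fin b.card} (hL : IsLatin L)
    (hidem : ∀ i, L i i = i) : IsIdempotentLatinOn b (b.squareOn L) where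
  mem _ hx _ hy := squareOn_mem hx hy
  row_injOn x hx y hy y' hy' h := by
    obtain ⟨i, rfl⟩ := exists_equivFin_symm_eq hx
    obtain ⟨j, rfl⟩ := exists_equivFin_symm_eq hy
    obtain ⟨j', rfl⟩ := exists_equivFin_symm_eq hy'
    simp only [squareOn_equivFin_symm] at h
    simpa using hL.1 i (by simpa using h)
  col_injOn y hy x hx x' hx' h := by
    obtain ⟨j, rfl⟩ := exists_equivFin_symm_eq hy
    obtain ⟨i, rfl⟩ := exists_equivFin_symm_eq hx
    obtain ⟨i', rfl⟩ := exists_equivFin_symm_eq hx'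
    simp only [squareOn_equivFin_symm] at h
    simpa using hL.2 j (by simpa using h)
  idem x hx := by
    obtain ⟨i, rfl⟩ := exists_equivFin_symm_eq hx
    simp [hidem]

theorem orthOn_squareOn {L L' : Fin b.card → Fin b.card → Fin b.card} (hO : OrthLS L L') :
    OrthOn b (b.squareOn L) (b.squareOn L') := by
  refine ⟨fun p hp => ⟨squareOn_mem hp.1 hp.2, squareOn_mem hp.1 hp.2⟩, ?_, ?_⟩
  · rintro ⟨x, y⟩ ⟨hx, hy⟩ ⟨x', y'⟩ ⟨hx', hy'⟩ h
    obtain ⟨i, rfl⟩ := exists_equivFin_symm_eq hx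
    obtain ⟨j, rfl⟩ := exists_equivFin_symm_eq hy
    obtain ⟨i', rfl⟩ := exists_equivFin_symm_eq hx'
    obtain ⟨j', rfl⟩ := exists_equivFin_symm_eq hy'
    simp only [squareOn_equivFin_symm, Prod.mk.injEq, Subtype.coe_inj,
      EmbeddingLike.apply_eq_iff_eq] at h
    obtain ⟨rfl, rfl⟩ := Prod.ext_iff.1 (hO.1 (a₁ := (i, j)) (a₂ := (i', j')) (Prod.ext h.1 h.2))
    rfl
  · rintro ⟨x, y⟩ ⟨hx, hy⟩
    obtain ⟨k, rfl⟩ := exists_equivFin_symm_eq hx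
    obtain ⟨l, rfl⟩ := exists_equivFin_symm_eq hy
    obtain ⟨⟨i, j⟩, hij⟩ := hO.2 (k, l)
    refine ⟨(b.equivFin.symm i, b.equivFin.symm j), ⟨by simp, by simp⟩, ?_⟩
    simp_all

theorem isIdempotentMOLSOn_squareOn {t : ℕ} {L : Fin t → Fin b.card → Fin b.card → Fin b.card}
    (hL : ∀ a, IsLatin (L a) ∧ ∀ i, L a i i = i)
    (hO : ∀ a a', a ≠ a' → OrthLS (L a) (L a')) :
    IsIdempotentMOLSOn b fun a => b.squareOn (L a) :=
  ⟨fun a => isIdempotentLatinOn_squareOn (hL a).1 (hL a).2,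
    fun a a' h => orthOn_squareOn (hO a a' h)⟩

end Finset

section Gluing

variable {α : Type*}

structure IsLinearSpaceWithHole (W : Finset α) (𝓑 : Set (Finset α)) : Prop where
  eq_of_mem_hole : ∀ b ∈ 𝓑, ∀ x ∈ b, ∀ y ∈ b, x ∈ W → y ∈ W → x = y
  existsUnique_block : ∀ x y, x ≠ y → ¬(x ∈ W ∧ y ∈ W) → ∃! b, b ∈ 𝓑 ∧ x ∈ b ∧ y ∈ b

namespace IsLinearSpaceWithHole

variable {W : Finset α} {𝓑 : Set (Finset α)} {b b' : Finset α} {x y : α}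

theorem eq_of_mem (h : IsLinearSpaceWithHole W 𝓑) (hb : b ∈ 𝓑) (hb' : b' ∈ 𝓑) (hxy : x ≠ y)
    (hx : x ∈ b) (hy : y ∈ b) (hx' : x ∈ b') (hy' : y ∈ b') : b = b' :=
  (h.existsUnique_block x y hxy fun hW => hxy (h.eq_of_mem_hole b hb x hx y hy hW.1 hW.2)).unique
    ⟨hb, hx, hy⟩ ⟨hb', hx', hy'⟩

end IsLinearSpaceWithHole

theorem IPBDExists.exists_isLinearSpaceWithHole {n m : ℕ} {K : Set ℕ} (h : IPBDExists n m K) :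
    ∃ (W : Finset (Fin n)) (𝓑 : Set (Finset (Fin n))),
      W.card = m ∧ IsLinearSpaceWithHole W 𝓑 ∧ ∀ b ∈ 𝓑, b.card ∈ K := by
  obtain ⟨W, B, hW, hK, hhole, hpair⟩ := h
  exact ⟨W, {b | b ∈ B}, hW, ⟨hhole, fun x y hxy hxyW =>
    Multiset.existsUnique_of_countP_eq_one (hpair x y hxy hxyW)⟩, hK⟩

variable [DecidableEq α] {W : Finset α} {𝓑 : Set (Finset α)} {S S' : Finset α → α → α → α}
  {b : Finset α} {i i' j j' s p q : α}

/- `h.choose` is the block through `i ≠ j`; on the diagonal any block through `i` returns `i`. -/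
open Classical in
noncomputable def glue (W : Finset α) (𝓑 : Set (Finset α)) (S : Finset α → α → α → α)
    (i j : α) : Option α :=
  if i ∈ W ∧ j ∈ W then none
  else if h : ∃ b ∈ 𝓑, i ∈ b ∧ j ∈ b then some (S h.choose i j) else some i

theorem glue_eq_none_iff : glue W 𝓑 S i j = none ↔ i ∈ W ∧ j ∈ W := by
  unfold glue
  split_ifs <;> simp_all

theorem glue_eq_of_mem (h𝓑 : IsLinearSpaceWithHole W 𝓑) (hS : ∀ b ∈ 𝓑, IsIdempotentLatinOn b (S b))
    (hb : b ∈ 𝓑) (hi : i ∈ b) (hj : j ∈ b) (hij : ¬(i ∈ W ∧ j ∈ W)) :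
    glue W 𝓑 S i j = some (S b i j) := by
  have hex : ∃ b ∈ 𝓑, i ∈ b ∧ j ∈ b := ⟨b, hb, hi, hj⟩
  obtain ⟨hc, hic, hjc⟩ := hex.choose_spec
  rw [glue, if_neg hij, dif_pos hex]
  rcases eq_or_ne i j with rfl | hne
  · rw [(hS _ hc).idem i hic, (hS b hb).idem i hi]
  · rw [h𝓑.eq_of_mem hc hb hne hic hjc hi hj]

theorem glue_self (hS : ∀ b ∈ 𝓑, IsIdempotentLatinOn b (S b)) (hi : i ∉ W) :
    glue W 𝓑 S i i = some i := by
  rw [glue, if_neg fun h => hi h.1]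
  split_ifs with hex
  · obtain ⟨hc, hic, -⟩ := hex.choose_spec
    rw [(hS _ hc).idem i hic]
  · rfl

theorem eq_of_glue_self_eq_some (hS : ∀ b ∈ 𝓑, IsIdempotentLatinOn b (S b))
    (h : glue W 𝓑 S i i = some s) : s = i := by
  by_cases hi : i ∈ W
  · simp [glue_eq_none_iff.2 ⟨hi, hi⟩] at h
  · rw [glue_self hS hi] at h
    exact (Option.some_injective _ h).symm

theorem exists_block_of_glue_eq_some (h𝓑 : IsLinearSpaceWithHole W 𝓑)
    (hS : ∀ b ∈ 𝓑, IsIdempotentLatinOn b (S b)) (h : glue W 𝓑 S i j = some s) (hij : i ≠ j) :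
    ∃ b ∈ 𝓑, i ∈ b ∧ j ∈ b ∧ S b i j = s := by
  have hW : ¬(i ∈ W ∧ j ∈ W) := fun hW => by simp [glue_eq_none_iff.2 hW] at h
  obtain ⟨b, ⟨hb, hi, hj⟩, -⟩ := h𝓑.existsUnique_block i j hij hW
  rw [glue_eq_of_mem h𝓑 hS hb hi hj hW] at h
  exact ⟨b, hb, hi, hj, Option.some_injective _ h⟩

theorem glue_row_inj (h𝓑 : IsLinearSpaceWithHole W 𝓑) (hS : ∀ b ∈ 𝓑, IsIdempotentLatinOn b (S b))
    (h₁ : glue W 𝓑 S i j = some s) (h₂ : glue W 𝓑 S i j' = some s) : j = j' := by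
  rcases eq_or_ne i j with rfl | hij <;> rcases eq_or_ne i j' with rfl | hij'
  · rfl
  · obtain ⟨b, hb, hi, hj', rfl⟩ := exists_block_of_glue_eq_some h𝓑 hS h₂ hij'
    exact absurd (eq_of_glue_self_eq_some hS h₁) ((hS b hb).ne_left hi hj' hij')
  · obtain ⟨b, hb, hi, hj, rfl⟩ := exists_block_of_glue_eq_some h𝓑 hS h₁ hij
    exact absurd (eq_of_glue_self_eq_some hS h₂) ((hS b hb).ne_left hi hj hij)
  · obtain ⟨b, hb, hi, hj, rfl⟩ := exists_block_of_glue_eq_some h𝓑 hS h₁ hij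
    obtain ⟨b', hb', hi', hj', hs'⟩ := exists_block_of_glue_eq_some h𝓑 hS h₂ hij'
    obtain rfl := h𝓑.eq_of_mem hb' hb ((hS b hb).ne_left hi hj hij).symm hi'
      (hs' ▸ (hS b' hb').mem _ hi' _ hj') hi ((hS b hb).mem _ hi _ hj)
    exact (hS b' hb').row_injOn i hi hj hj' hs'.symm

theorem glue_col_inj (h𝓑 : IsLinearSpaceWithHole W 𝓑) (hS : ∀ b ∈ 𝓑, IsIdempotentLatinOn b (S b))
    (h₁ : glue W 𝓑 S i j = some s) (h₂ : glue W 𝓑 S i' j = some s) : i = i' := by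
  rcases eq_or_ne j i with rfl | hij <;> rcases eq_or_ne j i' with rfl | hij'
  · rfl
  · obtain ⟨b, hb, hi', hj, rfl⟩ := exists_block_of_glue_eq_some h𝓑 hS h₂ hij'.symm
    exact absurd (eq_of_glue_self_eq_some hS h₁) ((hS b hb).ne_right hi' hj hij'.symm)
  · obtain ⟨b, hb, hi, hj, rfl⟩ := exists_block_of_glue_eq_some h𝓑 hS h₁ hij.symm
    exact absurd (eq_of_glue_self_eq_some hS h₂) ((hS b hb).ne_right hi hj hij.symm)
  · obtain ⟨b, hb, hi, hj, rfl⟩ := exists_block_of_glue_eq_some h𝓑 hS h₁ hij.symm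
    obtain ⟨b', hb', hi', hj', hs'⟩ := exists_block_of_glue_eq_some h𝓑 hS h₂ hij'.symm
    obtain rfl := h𝓑.eq_of_mem hb' hb ((hS b hb).ne_right hi hj hij.symm).symm hj'
      (hs' ▸ (hS b' hb').mem _ hi' _ hj') hj ((hS b hb).mem _ hi _ hj)
    exact (hS b' hb').col_injOn j hj hi hi' hs'.symm

theorem glue_ne_some_of_mem_hole (h𝓑 : IsLinearSpaceWithHole W 𝓑)
    (hS : ∀ b ∈ 𝓑, IsIdempotentLatinOn b (S b)) (hs : s ∈ W) (hij : i ∈ W ∨ j ∈ W) :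
    glue W 𝓑 S i j ≠ some s := by
  intro h
  rcases eq_or_ne i j with rfl | hne
  · obtain rfl := eq_of_glue_self_eq_some hS h
    simp [glue_eq_none_iff.2 ⟨hs, hs⟩] at h
  · obtain ⟨b, hb, hi, hj, rfl⟩ := exists_block_of_glue_eq_some h𝓑 hS h hne
    have hsb := (hS b hb).mem _ hi _ hj
    rcases hij with hiW | hjW
    · exact (hS b hb).ne_left hi hj hne (h𝓑.eq_of_mem_hole b hb _ hsb _ hi hs hiW)
    · exact (hS b hb).ne_right hi hj hne (h𝓑.eq_of_mem_hole b hb _ hsb _ hj hs hjW)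

theorem eq_of_glue_eq_some_of_orthOn (h𝓑 : IsLinearSpaceWithHole W 𝓑)
    (hS : ∀ b ∈ 𝓑, IsIdempotentLatinOn b (S b)) (hS' : ∀ b ∈ 𝓑, IsIdempotentLatinOn b (S' b))
    (hO : ∀ b ∈ 𝓑, OrthOn b (S b) (S' b)) (h : glue W 𝓑 S i j = some p)
    (h' : glue W 𝓑 S' i j = some p) : i = j := by
  by_contra hij
  obtain ⟨b, hb, hi, hj, hp⟩ := exists_block_of_glue_eq_some h𝓑 hS h hij
  obtain ⟨b', hb', hi', hj', hp'⟩ := exists_block_of_glue_eq_some h𝓑 hS' h' hij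
  obtain rfl := h𝓑.eq_of_mem hb' hb hij hi' hj' hi hj
  have hpb : p ∈ b' := hp ▸ (hS b' hb).mem _ hi _ hj
  have := (hO b' hb).injOn (Set.mk_mem_prod hi hj) (Set.mk_mem_prod hpb hpb)
    (Prod.ext (hp.trans ((hS b' hb).idem p hpb).symm) (hp'.trans ((hS' b' hb).idem p hpb).symm))
  simp only [Prod.mk.injEq] at this
  exact hij (this.1.trans this.2.symm)

theorem mem_block_of_glue_eq_some (h𝓑 : IsLinearSpaceWithHole W 𝓑)
    (hS : ∀ b ∈ 𝓑, IsIdempotentLatinOn b (S b)) (hS' : ∀ b ∈ 𝓑, IsIdempotentLatinOn b (S' b))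
    (h : glue W 𝓑 S i j = some p) (h' : glue W 𝓑 S' i j = some q) (hpq : p ≠ q) (hb : b ∈ 𝓑)
    (hp : p ∈ b) (hq : q ∈ b) : i ∈ b ∧ j ∈ b ∧ S b i j = p ∧ S' b i j = q := by
  have hij : i ≠ j := by
    rintro rfl
    exact hpq ((eq_of_glue_self_eq_some hS h).trans (eq_of_glue_self_eq_some hS' h').symm)
  obtain ⟨c, hc, hi, hj, rfl⟩ := exists_block_of_glue_eq_some h𝓑 hS h hij
  obtain ⟨c', hc', hi', hj', rfl⟩ := exists_block_of_glue_eq_some h𝓑 hS' h' hij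
  obtain rfl := h𝓑.eq_of_mem hc' hc hij hi' hj' hi hj
  obtain rfl := h𝓑.eq_of_mem hc hb hpq ((hS c' hc).mem _ hi _ hj) ((hS' c' hc).mem _ hi _ hj)
    hp hq
  exact ⟨hi, hj, rfl, rfl⟩

end Gluing

section IMOLS

variable {n : ℕ} {W : Finset (Fin n)} {𝓑 : Set (Finset (Fin n))}
  {S S' : Finset (Fin n) → Fin n → Fin n → Fin n}

theorem isILS_glue (h𝓑 : IsLinearSpaceWithHole W 𝓑) (hS : ∀ b ∈ 𝓑, IsIdempotentLatinOn b (S b)) :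
    IsILS W (glue W 𝓑 S) :=
  ⟨fun _ _ => glue_eq_none_iff, fun _ _ _ _ => glue_row_inj h𝓑 hS,
    fun _ _ _ _ => glue_col_inj h𝓑 hS, fun _ _ _ hs hij => glue_ne_some_of_mem_hole h𝓑 hS hs hij⟩

theorem orthILS_glue (h𝓑 : IsLinearSpaceWithHole W 𝓑) (hS : ∀ b ∈ 𝓑, IsIdempotentLatinOn b (S b))
    (hS' : ∀ b ∈ 𝓑, IsIdempotentLatinOn b (S' b)) (hO : ∀ b ∈ 𝓑, OrthOn b (S b) (S' b)) :
    OrthILS W (glue W 𝓑 S) (glue W 𝓑 S') := by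
  intro p q hpq
  rcases eq_or_ne p q with rfl | hne
  · have hp : p ∉ W := fun h => hpq ⟨h, h⟩
    refine ⟨(p, p), ⟨glue_self hS hp, glue_self hS' hp⟩, ?_⟩
    rintro ⟨i, j⟩ ⟨h, h'⟩
    dsimp only at h h'
    obtain rfl := eq_of_glue_eq_some_of_orthOn h𝓑 hS hS' hO h h'
    obtain rfl := eq_of_glue_self_eq_some hS h
    rfl
  obtain ⟨b, ⟨hb, hp, hq⟩, -⟩ := h𝓑.existsUnique_block p q hne hpq
  obtain ⟨⟨i, j⟩, ⟨hi, hj⟩, hij⟩ := (hO b hb).surjOn (Set.mk_mem_prod hp hq)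
  simp only [Prod.mk.injEq] at hij
  have hW : ¬(i ∈ W ∧ j ∈ W) := fun hW => hne <| by
    obtain rfl := h𝓑.eq_of_mem_hole b hb i hi j hj hW.1 hW.2
    rw [← hij.1, ← hij.2, (hS b hb).idem i hi, (hS' b hb).idem i hi]
  refine ⟨(i, j), ⟨?_, ?_⟩, ?_⟩
  · rw [glue_eq_of_mem h𝓑 hS hb hi hj hW, hij.1]
  · rw [glue_eq_of_mem h𝓑 hS' hb hi hj hW, hij.2]
  rintro ⟨i', j'⟩ ⟨h, h'⟩
  obtain ⟨hi', hj', hp', hq'⟩ := mem_block_of_glue_eq_some h𝓑 hS hS' h h' hne hb hp hq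
  exact (hO b hb).injOn (Set.mk_mem_prod hi' hj') (Set.mk_mem_prod hi hj)
    (Prod.ext (hp'.trans hij.1.symm) (hq'.trans hij.2.symm))

end IMOLS

/-- If an `IPBD((n;m),K)` exists and for each `k ∈ K` there are `t` mutually
orthogonal idempotent latin squares of order `k`, then `t`-IMOLS`(n;m)` exist. -/
theorem ipbd_to_imols (t n m : ℕ) (K : Set ℕ)
    (hIPBD : IPBDExists n m K)
    (hMOLS : ∀ k ∈ K, ∃ L : Fin t → Fin k → Fin k → Fin k,
      (∀ a, IsLatin (L a) ∧ ∀ i, L a i i = i) ∧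
      (∀ a b, a ≠ b → OrthLS (L a) (L b))) :
    ∃ (M : Finset (Fin n)) (L : Fin t → Fin n → Fin n → Option (Fin n)),
      M.card = m ∧ (∀ a, IsILS M (L a)) ∧
      (∀ a b, a ≠ b → OrthILS M (L a) (L b)) := by
  obtain ⟨W, 𝓑, hW, h𝓑, hK⟩ := hIPBD.exists_isLinearSpaceWithHole
  have hblocks : ∀ b : Finset (Fin n), ∃ F : Fin t → Fin n → Fin n → Fin n,
      b ∈ 𝓑 → IsIdempotentMOLSOn b F := by
    intro b
    by_cases hb : b ∈ 𝓑
    · obtain ⟨L, hL, hO⟩ := hMOLS b.card (hK b hb)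
      exact ⟨_, fun _ => Finset.isIdempotentMOLSOn_squareOn hL hO⟩
    · exact ⟨fun _ x _ => x, fun h => absurd h hb⟩
  choose S hS using hblocks
  have hlatin : ∀ a, ∀ b ∈ 𝓑, IsIdempotentLatinOn b (S b a) := fun a b hb => (hS b hb).1 a
  exact ⟨W, fun a => glue W 𝓑 (S · a), hW, fun a => isILS_glue h𝓑 (hlatin a),
    fun a a' haa' => orthILS_glue h𝓑 (hlatin a) (hlatin a') fun b hb => (hS b hb).2 a a' haa'⟩
end

section
/- In an IPBD((v;w),K) with v > w and k = min K, equality v = (k-1)w + 1 holds if and only if every block has size exactly k and every block intersects the hole. -/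
/-!
Fix a point `x` outside the hole. Every other point is joined to `x` by exactly one block, so
summing over the blocks `b` through `x` gives `∑ (|b| - 1) = v - 1` and `∑ |b ∩ W| = w`. Since a
block meets the hole at most once and has at least `k` points, each term satisfies
`(k - 1) |b ∩ W| ≤ |b| - 1`; hence `v - 1 = (k - 1) w` exactly when every block through `x` has
`|b| - 1 = (k - 1) |b ∩ W|`, which for a block of at least two points means that it has size `k`
and meets the hole. Every block has a point outside the hole, and since `w < v` such points exist.
-/

open Finset

theorem Multiset.sum_map_eq_sum_map_iff_of_le {ι : Type*} {s : Multiset ι} {f g : ι → ℕ}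
    (hle : ∀ i ∈ s, f i ≤ g i) :
    (s.map f).sum = (s.map g).sum ↔ ∀ i ∈ s, f i = g i := by
  refine ⟨fun heq i hi => ?_, fun h => congrArg Multiset.sum (Multiset.map_congr rfl h)⟩
  by_contra hne
  exact (Multiset.sum_lt_sum hle ⟨i, hi, lt_of_le_of_ne (hle i hi) hne⟩).ne heq

theorem Multiset.sum_map_card_inter {α : Type*} [DecidableEq α] (M : Multiset (Finset α))
    (s : Finset α) :
    (M.map fun b => (b ∩ s).card).sum = ∑ y ∈ s, M.countP (y ∈ ·) := by
  induction M using Multiset.induction_on with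
  | empty => simp
  | cons b M ih =>
    simp only [Multiset.map_cons, Multiset.sum_cons, Multiset.countP_cons, sum_add_distrib, ih,
      sum_boole, filter_mem_eq_inter, Finset.inter_comm s b]
    exact add_comm _ _

section IPBD

variable {α : Type*} [DecidableEq α] {W b : Finset α} {B : Multiset (Finset α)} {x : α} {k : ℕ}

theorem card_inter_le_one_of_pairwise_eq (hhole : ∀ x ∈ b, ∀ y ∈ b, x ∈ W → y ∈ W → x = y) :
    (b ∩ W).card ≤ 1 :=
  card_le_one.2 fun x hx y hy =>
    hhole x (mem_inter.1 hx).1 y (mem_inter.1 hy).1 (mem_inter.1 hx).2 (mem_inter.1 hy).2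

theorem exists_mem_notMem_of_card_inter_le_one (hb : 2 ≤ b.card) (hbW : (b ∩ W).card ≤ 1) :
    ∃ x ∈ b, x ∉ W := by
  have hsdiff : 0 < (b \ W).card := by
    have := card_sdiff_add_card_inter b W
    omega
  obtain ⟨x, hx⟩ := card_pos.1 hsdiff
  exact ⟨x, (mem_sdiff.1 hx).1, (mem_sdiff.1 hx).2⟩

theorem mul_card_inter_le_card_sub_one (hk : k ≤ b.card) (hbW : (b ∩ W).card ≤ 1) :
    (k - 1) * (b ∩ W).card ≤ b.card - 1 := by
  interval_cases (b ∩ W).card <;> omega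

theorem card_sub_one_eq_mul_card_inter_iff (hb : 2 ≤ b.card) (hbW : (b ∩ W).card ≤ 1) :
    b.card - 1 = (k - 1) * (b ∩ W).card ↔ b.card = k ∧ (b ∩ W).Nonempty := by
  rw [← card_pos]
  interval_cases (b ∩ W).card <;> omega

theorem sum_card_inter_blocks_through_eq_card {s : Finset α}
    (h : ∀ y ∈ s, B.countP (fun b => y ∈ b ∧ x ∈ b) = 1) :
    ((B.filter (x ∈ ·)).map fun b => (b ∩ s).card).sum = s.card := by
  rw [Multiset.sum_map_card_inter]
  simp only [Multiset.countP_filter]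
  rw [sum_congr rfl h, sum_const, smul_eq_mul, mul_one]


theorem sum_card_sub_one_blocks_through [Fintype α] (hcov : ∀ x y : α, x ≠ y → ¬(x ∈ W ∧ y ∈ W) →
      B.countP (fun s => x ∈ s ∧ y ∈ s) = 1) (hx : x ∉ W) :
    ((B.filter (x ∈ ·)).map fun b => b.card - 1).sum = Fintype.card α - 1 := by
  have h := sum_card_inter_blocks_through_eq_card (B := B) (s := univ.erase x)
    fun y hy => hcov y x (ne_of_mem_erase hy) fun h => hx h.2
  rw [card_erase_of_mem (mem_univ x), card_univ] at h
  rw [← h]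
  refine congrArg Multiset.sum (Multiset.map_congr rfl fun b hb => ?_)
  rw [inter_erase, inter_univ, card_erase_of_mem (Multiset.mem_filter.1 hb).2]

theorem sum_card_inter_hole_blocks_through (hcov : ∀ x y : α, x ≠ y → ¬(x ∈ W ∧ y ∈ W) →
      B.countP (fun s => x ∈ s ∧ y ∈ s) = 1) (hx : x ∉ W) :
    ((B.filter (x ∈ ·)).map fun b => (b ∩ W).card).sum = W.card :=
  sum_card_inter_blocks_through_eq_card fun y hy =>
    hcov y x (ne_of_mem_of_not_mem hy hx) fun h => hx h.2

theorem card_sub_one_eq_iff_forall_blocks_through [Fintype α]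
    (hcov : ∀ x y : α, x ≠ y → ¬(x ∈ W ∧ y ∈ W) → B.countP (fun s => x ∈ s ∧ y ∈ s) = 1)
    (hx : x ∉ W) (hle : ∀ b ∈ B, (k - 1) * (b ∩ W).card ≤ b.card - 1) :
    Fintype.card α - 1 = (k - 1) * W.card ↔
      ∀ b ∈ B, x ∈ b → b.card - 1 = (k - 1) * (b ∩ W).card := by
  rw [← sum_card_sub_one_blocks_through hcov hx, ← sum_card_inter_hole_blocks_through hcov hx,
    ← Multiset.sum_map_mul_left, eq_comm, Multiset.sum_map_eq_sum_map_iff_of_le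
      fun b hb => hle b (Multiset.mem_filter.1 hb).1]
  simp only [Multiset.mem_filter, and_imp, eq_comm]

end IPBD

theorem ipbd_hole_size_equality_general (v w : ℕ) (hvw : w < v)
    (K : Set ℕ) (hK : ∀ j ∈ K, 2 ≤ j)
    (k : ℕ) (hkmin : ∀ j ∈ K, k ≤ j)
    (W : Finset (Fin v)) (hW : W.card = w)
    (B : Multiset (Finset (Fin v)))
    (hsz : ∀ b ∈ B, b.card ∈ K)
    (hhole : ∀ b ∈ B, ∀ x ∈ b, ∀ y ∈ b, x ∈ W → y ∈ W → x = y)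
    (hcov : ∀ x y : Fin v, x ≠ y → ¬(x ∈ W ∧ y ∈ W) →
      Multiset.countP (fun s => x ∈ s ∧ y ∈ s) B = 1) :
    v = (k - 1) * w + 1 ↔ (∀ b ∈ B, b.card = k ∧ (b ∩ W).Nonempty) := by
  have hcap b (hb : b ∈ B) : (b ∩ W).card ≤ 1 := card_inter_le_one_of_pairwise_eq (hhole b hb)
  have hblock b (hb : b ∈ B) :=
    card_sub_one_eq_mul_card_inter_iff (k := k) (hK _ (hsz b hb)) (hcap b hb)
  have hequality x (hx : x ∉ W) :
      v = (k - 1) * w + 1 ↔ ∀ b ∈ B, x ∈ b → b.card - 1 = (k - 1) * (b ∩ W).card := by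
    rw [← card_sub_one_eq_iff_forall_blocks_through hcov hx
      fun b hb => mul_card_inter_le_card_sub_one (hkmin _ (hsz b hb)) (hcap b hb),
      Fintype.card_fin, hW]
    omega
  constructor
  · intro heq b hb
    obtain ⟨x, hxb, hxW⟩ := exists_mem_notMem_of_card_inter_le_one (hK _ (hsz b hb)) (hcap b hb)
    exact (hblock b hb).1 ((hequality x hxW).1 heq b hb hxb)
  · intro hall
    obtain ⟨x, -, hx⟩ : ∃ x ∈ univ, x ∉ W :=
      exists_mem_notMem_of_card_lt_card (by rwa [card_univ, Fintype.card_fin, hW])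
    exact (hequality x hx).2 fun b hb _ => (hblock b hb).2 (hall b hb)

/-- Equality case of the hole-size bound: in an `IPBD((v;w),K)` with `v > w` and
`k = min K`, one has `v = (k-1)w + 1` if and only if every block has size exactly
`k` and every block intersects the hole. -/
theorem ipbd_hole_size_equality (v w : ℕ) (hvw : w < v)
    (K : Set ℕ) (hK : ∀ j ∈ K, 2 ≤ j)
    (k : ℕ) (hkK : k ∈ K) (hkmin : ∀ j ∈ K, k ≤ j)
    (W : Finset (Fin v)) (hW : W.card = w)
    (B : Multiset (Finset (Fin v)))
    (hsz : ∀ b ∈ B, b.card ∈ K)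
    (hhole : ∀ b ∈ B, ∀ x ∈ b, ∀ y ∈ b, x ∈ W → y ∈ W → x = y)
    (hcov : ∀ x y : Fin v, x ≠ y → ¬(x ∈ W ∧ y ∈ W) →
      Multiset.countP (fun s => x ∈ s ∧ y ∈ s) B = 1) :
    v = (k - 1) * w + 1 ↔ (∀ b ∈ B, b.card = k ∧ (b ∩ W).Nonempty) :=
  ipbd_hole_size_equality_general v w hvw K hK k hkmin W hW B hsz hhole hcov
end
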